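/- arXiv:2602.23340 — 9 statements merged into one kernel-verified Lean document; each statement's English description precedes it below -/
import Mathlib

section
/- Let X ⊆ 2^ω and suppose X = ⋃_{n<ω} X_n. Then F_X = { ⋃_{n<ω} a_n : for every n < ω, a_n ∈ F_{X_n} }, where F_X denotes the Raisonnier filter of X (with unions of subsets of ℕ taken as unions of sets). -/
open Filter Set

/-- The splitting point of two distinct elements of Cantor space. -/
noncomputable def splitPt (x y : ℕ → Bool) : ℕ := sInf {n | x n ≠ y n}

/-- The set of splitting points of a set `X ⊆ 2^ω`. -/
def splitPts (X : Set (ℕ → Bool)) : Set ℕ :=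
  {k | ∃ x ∈ X, ∃ y ∈ X, x ≠ y ∧ splitPt x y = k}

/-- The Raisonnier filter of `X ⊆ 2^ω`: all `a ⊆ ℕ` such that there is a countable
family `(Y n)` covering `X` with `⋃ n, H(Y n) ⊆ a`. -/
def raisonnier (X : Set (ℕ → Bool)) : Set (Set ℕ) :=
  {a | ∃ Y : ℕ → Set (ℕ → Bool), X ⊆ (⋃ n, Y n) ∧ (⋃ n, splitPts (Y n)) ⊆ a}

theorem stmt2 (X : Set (ℕ → Bool)) (Xn : ℕ → Set (ℕ → Bool)) (hX : X = ⋃ n, Xn n) :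
    raisonnier X =
      {b : Set ℕ | ∃ a : ℕ → Set ℕ, (∀ n, a n ∈ raisonnier (Xn n)) ∧ b = ⋃ n, a n} := by
  ext b
  constructor
  · rintro ⟨Y, hcov, hsub⟩
    refine ⟨fun _ => b, fun n => ⟨Y, ?_, hsub⟩, (iUnion_const b).symm⟩
    exact fun x hx => hcov (hX ▸ mem_iUnion.2 ⟨n, hx⟩)
  · rintro ⟨a, ha, rfl⟩
    choose Y hcov hsub using ha
    refine ⟨fun k => Y k.unpair.1 k.unpair.2, ?_, ?_⟩
    · intro x hx
      rw [hX] at hx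
      obtain ⟨n, hn⟩ := mem_iUnion.1 hx
      obtain ⟨m, hm⟩ := mem_iUnion.1 (hcov n hn)
      exact mem_iUnion.2 ⟨Nat.pair n m, by simpa [Nat.unpair_pair] using hm⟩
    · intro k hk
      obtain ⟨j, hj⟩ := mem_iUnion.1 hk
      exact mem_iUnion.2 ⟨j.unpair.1, hsub j.unpair.1 (mem_iUnion.2 ⟨j.unpair.2, hj⟩)⟩
end

section
/- For every infinite set a ⊆ ℕ, the Raisonnier filter of the powerset of a satisfies F_{𝒫(a)} = { b ⊆ ℕ : a ⊆* b }, where a ⊆* b means that a \ b is finite, and 𝒫(a) = {x ⊆ ℕ : x ⊆ a} is viewed as a subset of 2^ω via characteristic functions. -/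
open Filter Set

lemma splitPt_ne {x y : ℕ → Bool} (h : x ≠ y) : x (splitPt x y) ≠ y (splitPt x y) := by
  have : {n | x n ≠ y n}.Nonempty := by
    rw [Function.ne_iff] at h
    exact h
  exact Nat.sInf_mem this

theorem stmt3 (a : Set ℕ) (ha : a.Infinite) :
    raisonnier {x : ℕ → Bool | ∀ n, x n = true → n ∈ a} = {b : Set ℕ | (a \ b).Finite} := by
  classical
  ext b
  simp only [raisonnier, mem_setOf_eq]
  constructor
  · rintro ⟨Y, hcov, hsplit⟩
    by_contra hfin
    have hinf : (a \ b).Infinite := hfin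
    set S : Set (ℕ → Bool) := {x | ∀ n, x n = true → n ∈ a \ b} with hS
    have hSX : S ⊆ {x : ℕ → Bool | ∀ n, x n = true → n ∈ a} := fun x hx n hn => (hx n hn).1
    -- S is uncountable
    have hUncA : Uncountable (Set ↥(a \ b)) := by
      have := hinf.to_subtype
      rw [← Cardinal.aleph0_lt_mk_iff, Cardinal.mk_set]
      exact lt_of_le_of_lt (Cardinal.aleph0_le_mk _) (Cardinal.cantor _)
    set F : Set ↥(a \ b) → (ℕ → Bool) :=
      fun t n => if h : n ∈ a \ b then decide ((⟨n, h⟩ : ↥(a \ b)) ∈ t) else false with hF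
    have hFinj : Function.Injective F := by
      intro t t' htt
      ext ⟨n, hn⟩
      have := congrFun htt n
      simp only [hF, dif_pos hn, decide_eq_decide] at this
      exact this
    have hFrange : range F ⊆ S := by
      rintro _ ⟨t, rfl⟩ n hn
      by_cases h : n ∈ a \ b
      · exact h
      · rw [hF] at hn
        simp only [dif_neg h] at hn
        exact absurd hn Bool.false_ne_true
    have hUnc : ¬ S.Countable := by
      intro hSc
      have : (range F).Countable := hSc.mono hFrange
      have := this.to_subtype
      have : Countable (Set ↥(a \ b)) :=
        Countable.of_equiv _ (Equiv.ofInjective F hFinj).symm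
      exact (not_countable_iff.2 hUncA) this
    -- find two distinct elements of S in the same Y n
    have hex : ∃ n, ∃ x ∈ Y n ∩ S, ∃ y ∈ Y n ∩ S, x ≠ y := by
      by_contra h
      push_neg at h
      apply hUnc
      have hsub : S ⊆ ⋃ n, (Y n ∩ S) := fun x hx => by
        obtain ⟨_, ⟨n, rfl⟩, hn⟩ := hcov (hSX hx)
        exact mem_iUnion.2 ⟨n, hn, hx⟩
      refine (countable_iUnion fun n => Set.Subsingleton.countable ?_).mono hsub
      intro x hx y hy
      exact h n x hx y hy
    obtain ⟨n, x, hx, y, hy, hxy⟩ := hex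
    set k := splitPt x y with hk
    have hkb : k ∈ b := hsplit (mem_iUnion.2 ⟨n, x, hx.1, y, hy.1, hxy, rfl⟩)
    have hne : x k ≠ y k := splitPt_ne hxy
    have hkab : k ∈ a \ b := by
      rcases Bool.eq_false_or_eq_true (x k) with h1 | h1
      · exact hx.2 k h1
      · have h2 : y k = true := by
          cases h2 : y k
          · exact absurd (h1.trans h2.symm) hne
          · rfl
        exact hy.2 k h2
    exact hkab.2 hkb
  · intro hfin
    have hsub : Finite ↥(a \ b) := hfin.to_subtype
    obtain ⟨f, hf⟩ := exists_surjective_nat (↥(a \ b) → Bool)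
    refine ⟨fun n => {x | (∀ m, x m = true → m ∈ a) ∧
      ∀ (m : ℕ) (h : m ∈ a \ b), x m = f n ⟨m, h⟩}, ?_, ?_⟩
    · intro x hx
      obtain ⟨n, hn⟩ := hf (fun m : ↥(a \ b) => x m)
      exact mem_iUnion.2 ⟨n, hx, fun m h => by rw [hn]⟩
    · intro k hk
      obtain ⟨n, x, hx, y, hy, hxy, rfl⟩ := mem_iUnion.1 hk
      set k := splitPt x y with hk
      have hne : x k ≠ y k := splitPt_ne hxy
      have hka : k ∈ a := by
        rcases Bool.eq_false_or_eq_true (x k) with h1 | h1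
        · exact hx.1 k h1
        · have h2 : y k = true := by
            cases h2 : y k
            · exact absurd (h1.trans h2.symm) hne
            · rfl
          exact hy.1 k h2
      by_contra hkb
      exact hne ((hx.2 k ⟨hka, hkb⟩).trans (hy.2 k ⟨hka, hkb⟩).symm)
end

section
/- The Raisonnier filter of the whole Cantor space, F_{2^ω}, is the Fréchet filter, i.e., F_{2^ω} consists exactly of the cofinite subsets of ℕ. -/
open Filter Set

lemma uncountable_cantor : Uncountable (ℕ → Bool) := by
  rw [← not_countable_iff]
  intro h
  obtain ⟨f, hf⟩ := h.exists_injective_nat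
  classical
  apply Function.cantor_injective (fun s : Set ℕ => f (fun n => decide (n ∈ s)))
  intro s t hst
  have := hf hst
  ext n
  have := congrFun this n
  simpa using this

theorem stmt4 : raisonnier (Set.univ : Set (ℕ → Bool)) = {a : Set ℕ | aᶜ.Finite} := by
  classical
  ext a
  simp only [mem_setOf_eq]
  constructor
  · rintro ⟨Y, hcov, hsub⟩
    by_contra hinf
    replace hinf : aᶜ.Infinite := hinf
    set S : Set (ℕ → Bool) := {x | ∀ n ∈ a, x n = false} with hSdef
    -- S is uncountable
    have hSunc : ¬ S.Countable := by
      intro hc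
      set e := hinf.natEmbedding with he
      set F : (ℕ → Bool) → (ℕ → Bool) := fun g n =>
        if h : ∃ k, ((e k : ℕ) = n) then g h.choose else false with hF
      have hFe : ∀ g k, F g (e k) = g k := by
        intro g k
        have h : ∃ k', ((e k' : ℕ) = (e k : ℕ)) := ⟨k, rfl⟩
        have : h.choose = k := by
          have := h.choose_spec
          exact e.injective (Subtype.ext this)
        simp [hF, dif_pos h, this]
      have hFinj : Function.Injective F := by
        intro g g' hgg
        funext k
        have := congrFun hgg (e k)
        rwa [hFe, hFe] at this
      have hFS : ∀ g, F g ∈ S := by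
        intro g n hn
        have : ¬ ∃ k, ((e k : ℕ) = n) := by
          rintro ⟨k, hk⟩
          exact (e k).2 (hk ▸ hn)
        simp [hF, dif_neg this]
      have : Countable (ℕ → Bool) := by
        have h1 : (Set.range F).Countable := hc.mono (range_subset_iff.2 hFS)
        have h2 : Countable (Set.range F) := h1.to_subtype
        exact Countable.of_equiv _ (Equiv.ofInjective F hFinj).symm
      exact @not_countable _ uncountable_cantor this
    -- some Y n contains two distinct elements of S
    have hex : ∃ n, ∃ x ∈ Y n ∩ S, ∃ y ∈ Y n ∩ S, x ≠ y := by
      by_contra hno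
      push_neg at hno
      apply hSunc
      have hsub' : S ⊆ ⋃ n, (Y n ∩ S) := by
        intro x hx
        obtain ⟨n, hn⟩ := mem_iUnion.1 (hcov (mem_univ x))
        exact mem_iUnion.2 ⟨n, hn, hx⟩
      refine (Set.countable_iUnion fun n => ?_).mono hsub'
      exact Set.Subsingleton.countable (fun x hx y hy => by
        by_contra hxy; exact hxy (hno n x hx y hy))
    obtain ⟨n, x, hx, y, hy, hxy⟩ := hex
    have hk : splitPt x y ∈ a := hsub (mem_iUnion.2 ⟨n, x, hx.1, y, hy.1, hxy, rfl⟩)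
    have hne : {m | x m ≠ y m}.Nonempty := by
      rcases Function.ne_iff.1 hxy with ⟨m, hm⟩
      exact ⟨m, hm⟩
    have hmem : x (splitPt x y) ≠ y (splitPt x y) := Nat.sInf_mem hne
    exact hmem ((hx.2 _ hk).trans (hy.2 _ hk).symm)
  · intro hfin
    obtain ⟨M, hM⟩ := hfin.bddAbove
    set N := M + 1 with hNdef
    have hN : ∀ k, k ∉ a → k < N := fun k hk => Nat.lt_succ_of_le (hM hk)
    obtain ⟨f, hf⟩ := exists_surjective_nat (Fin N → Bool)
    refine ⟨fun n => {x | ∀ i : Fin N, x i = f n i}, ?_, ?_⟩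
    · intro x _
      obtain ⟨n, hn⟩ := hf (fun i : Fin N => x i)
      exact mem_iUnion.2 ⟨n, fun i => by rw [hn]⟩
    · intro k hk
      obtain ⟨n, x, hx, y, hy, hxy, hsplit⟩ := mem_iUnion.1 hk
      by_contra hka
      have hk' : k < N := hN k hka
      have hne : {m | x m ≠ y m}.Nonempty := by
        rcases Function.ne_iff.1 hxy with ⟨m, hm⟩
        exact ⟨m, hm⟩
      have hmem : x (splitPt x y) ≠ y (splitPt x y) := Nat.sInf_mem hne
      rw [hsplit] at hmem
      exact hmem ((hx ⟨k, hk'⟩).trans (hy ⟨k, hk'⟩).symm)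
end

section
/- Let X ⊆ 2^ω and let W = { y ∈ 2^ω : there exists x ∈ X with y =* x }, where y =* x means y(n) = x(n) for all but finitely many n. Then F_X = F_W, where F_X denotes the Raisonnier filter of X. -/
open Filter Set

/-! A point of `W` differs from some point of `X` only below some `m`. Cutting each
piece `Y` of a cover of `X` according to the first `m` bits of its points, and replacing those
bits by a fixed word, yields countably many pieces covering `W`. Two points of such a piece
agree below `m`, as do the points they come from, and coincide with those from `m` on, so both
pairs split at the same place: no new splitting points appear. -/

lemma splitPt_congr {x x' y y' : ℕ → Bool} (h : ∀ n, x n = x' n ↔ y n = y' n) :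
    splitPt x x' = splitPt y y' := by
  simp only [splitPt, ne_eq, h]

lemma splitPts_subset_of_forall_agree {Y Z : Set (ℕ → Bool)}
    (h : ∀ y ∈ Z, ∀ y' ∈ Z, ∃ x ∈ Y, ∃ x' ∈ Y, ∀ n, x n = x' n ↔ y n = y' n) :
    splitPts Z ⊆ splitPts Y := by
  rintro k ⟨y, hy, y', hy', hne, rfl⟩
  obtain ⟨x, hx, x', hx', hagree⟩ := h y hy y' hy'
  refine ⟨x, hx, x', hx', fun hxx' => hne ?_, splitPt_congr hagree⟩
  funext n
  exact (hagree n).1 (congrFun hxx' n)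

def replacePrefix (Y : Set (ℕ → Bool)) (m : ℕ) (s t : Fin m → Bool) : Set (ℕ → Bool) :=
  {y | ∃ x ∈ Y, (∀ j : Fin m, y j = s j ∧ x j = t j) ∧ ∀ n, m ≤ n → y n = x n}

lemma splitPts_replacePrefix_subset (Y : Set (ℕ → Bool)) (m : ℕ) (s t : Fin m → Bool) :
    splitPts (replacePrefix Y m s t) ⊆ splitPts Y := by
  refine splitPts_subset_of_forall_agree ?_
  rintro y ⟨x, hx, hpre, hsuf⟩ y' ⟨x', hx', hpre', hsuf'⟩
  refine ⟨x, hx, x', hx', fun n => ?_⟩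
  rcases lt_or_ge n m with hn | hn
  · obtain ⟨hy, hx⟩ := hpre ⟨n, hn⟩
    obtain ⟨hy', hx'⟩ := hpre' ⟨n, hn⟩
    simp only [hy, hx, hy', hx']
  · rw [hsuf n hn, hsuf' n hn]

lemma mem_replacePrefix {Y : Set (ℕ → Bool)} {x y : ℕ → Bool} (hx : x ∈ Y) {m : ℕ}
    (hm : ∀ n, m ≤ n → y n = x n) :
    y ∈ replacePrefix Y m (fun j => y j) (fun j => x j) :=
  ⟨x, hx, fun _ => ⟨rfl, rfl⟩, hm⟩

lemma mem_raisonnier_of_countable_cover {ι : Type*} [Countable ι] [Nonempty ι]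
    {X : Set (ℕ → Bool)} {a : Set ℕ} (Y : ι → Set (ℕ → Bool)) (hX : X ⊆ ⋃ i, Y i)
    (ha : ∀ i, splitPts (Y i) ⊆ a) : a ∈ raisonnier X := by
  obtain ⟨f, hf⟩ := exists_surjective_nat ι
  exact ⟨Y ∘ f, hX.trans (hf.iUnion_comp Y).superset, iUnion_subset fun n => ha (f n)⟩

lemma raisonnier_anti {X W : Set (ℕ → Bool)} (h : X ⊆ W) : raisonnier W ⊆ raisonnier X :=
  fun _ ⟨Y, hW, ha⟩ => ⟨Y, h.trans hW, ha⟩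

lemma raisonnier_subset_of_forall_eventually_eq {X W : Set (ℕ → Bool)}
    (h : ∀ y ∈ W, ∃ x ∈ X, ∀ᶠ n in atTop, y n = x n) : raisonnier X ⊆ raisonnier W := by
  rintro a ⟨Y, hX, ha⟩
  refine mem_raisonnier_of_countable_cover
    (ι := ℕ × (m : ℕ) × (Fin m → Bool) × (Fin m → Bool))
    (fun ⟨i, m, s, t⟩ => replacePrefix (Y i) m s t) ?_
    fun ⟨i, m, s, t⟩ => (splitPts_replacePrefix_subset _ _ _ _).trans
      ((subset_iUnion _ i).trans ha)
  intro y hy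
  obtain ⟨x, hxX, hyx⟩ := h y hy
  obtain ⟨m, hm⟩ := eventually_atTop.mp hyx
  obtain ⟨i, hxY⟩ := mem_iUnion.mp (hX hxX)
  exact mem_iUnion.mpr ⟨⟨i, m, fun j => y j, fun j => x j⟩, mem_replacePrefix hxY hm⟩

theorem stmt5 (X : Set (ℕ → Bool))
    (W : Set (ℕ → Bool)) (hW : W = {y | ∃ x ∈ X, ∀ᶠ n in atTop, y n = x n}) :
    raisonnier X = raisonnier W := by
  subst hW
  refine (raisonnier_subset_of_forall_eventually_eq fun _ hy => hy).antisymm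
    (raisonnier_anti fun x hx => ?_)
  exact ⟨x, hx, Eventually.of_forall fun _ => rfl⟩
end

section
/- Let X ⊆ 2^ω and let s be a finite binary string. Then the Raisonnier filter of s⌢X = { s⌢x : x ∈ X } is generated by { a + |s| : a ∈ F_X }; that is, b ∈ F_{s⌢X} if and only if there exists a ∈ F_X with a + |s| ⊆ b, where a + n = { k + n : k ∈ a } for a ⊆ ℕ and n ∈ ℕ, and s⌢x denotes the concatenation of the string s followed by x. -/
open Filter Set

/-- Concatenation of a finite binary string `s` with `x ∈ 2^ω`. -/
def cat (s : List Bool) (x : ℕ → Bool) : ℕ → Bool :=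
  fun n => if h : n < s.length then s.get ⟨n, h⟩ else x (n - s.length)

lemma cat_apply_add (s : List Bool) (x : ℕ → Bool) (n : ℕ) :
    cat s x (n + s.length) = x n := by
  simp [cat, Nat.not_lt.2 (Nat.le_add_left _ _)]

lemma cat_ne (s : List Bool) {x y : ℕ → Bool} (h : x ≠ y) : cat s x ≠ cat s y := by
  intro he
  apply h
  funext n
  have := congrFun he (n + s.length)
  rwa [cat_apply_add, cat_apply_add] at this

lemma diffSet_cat (s : List Bool) (x y : ℕ → Bool) :
    {n | cat s x n ≠ cat s y n} = (fun k => k + s.length) '' {n | x n ≠ y n} := by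
  ext n
  simp only [Set.mem_setOf_eq, Set.mem_image]
  constructor
  · intro h
    by_cases hn : n < s.length
    · simp [cat, hn] at h
    · refine ⟨n - s.length, ?_, by omega⟩
      simpa [cat, hn] using h
  · rintro ⟨m, hm, rfl⟩
    simpa [cat_apply_add] using hm

lemma splitPt_cat (s : List Bool) {x y : ℕ → Bool} (h : x ≠ y) :
    splitPt (cat s x) (cat s y) = splitPt x y + s.length := by
  have hne : {n | x n ≠ y n}.Nonempty := by
    by_contra hc
    apply h
    funext n
    by_contra hn
    exact hc ⟨n, hn⟩
  unfold splitPt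
  rw [diffSet_cat]
  apply le_antisymm
  · exact Nat.sInf_le ⟨sInf {n | x n ≠ y n}, Nat.sInf_mem hne, rfl⟩
  · have hne' : ((fun k => k + s.length) '' {n | x n ≠ y n}).Nonempty :=
      hne.image _
    obtain ⟨m, hm, hme⟩ := Nat.sInf_mem hne'
    have hme' : m + s.length = sInf ((fun k => k + s.length) '' {n | x n ≠ y n}) := hme
    have := Nat.sInf_le hm
    omega

theorem stmt6 (X : Set (ℕ → Bool)) (s : List Bool) (b : Set ℕ) :
    b ∈ raisonnier (cat s '' X) ↔
      ∃ a ∈ raisonnier X, (fun k => k + s.length) '' a ⊆ b := by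
  constructor
  · rintro ⟨Y, hcov, hsub⟩
    refine ⟨⋃ n, splitPts (fun x => cat s x ∈ Y n), ⟨_, ?_, subset_rfl⟩, ?_⟩
    · intro x hx
      obtain ⟨S, ⟨n, rfl⟩, hn⟩ := hcov ⟨x, hx, rfl⟩
      exact Set.mem_iUnion.2 ⟨n, hn⟩
    · rintro _ ⟨k, hk, rfl⟩
      obtain ⟨S, ⟨n, rfl⟩, x, hx, y, hy, hxy, hpt⟩ := hk
      apply hsub
      refine Set.mem_iUnion.2 ⟨n, cat s x, hx, cat s y, hy, cat_ne s hxy, ?_⟩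
      rw [splitPt_cat s hxy, hpt]
  · rintro ⟨a, ⟨Z, hcov, hsub⟩, hb⟩
    refine ⟨fun n => cat s '' Z n, ?_, ?_⟩
    · rintro _ ⟨x, hx, rfl⟩
      obtain ⟨S, ⟨n, rfl⟩, hn⟩ := hcov hx
      exact Set.mem_iUnion.2 ⟨n, x, hn, rfl⟩
    · rintro k hk
      obtain ⟨S, ⟨n, rfl⟩, u, hu, v, hv, huv, hpt⟩ := hk
      obtain ⟨x, hx, rfl⟩ := hu
      obtain ⟨y, hy, rfl⟩ := hv
      have hxy : x ≠ y := fun he => huv (by rw [he])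
      apply hb
      refine ⟨splitPt x y, hsub (Set.mem_iUnion.2 ⟨n, x, hx, y, hy, hxy, rfl⟩), ?_⟩
      rw [← hpt, splitPt_cat s hxy]
end

section
/- Let X ⊆ 2^ω. If for every partitioning real d there exists a d-binary slalom B such that X goes through B, then the Raisonnier filter F_X is rapid. -/
open Filter Set

/-- A family `F` of subsets of ℕ is rapid if for every strictly increasing `f : ℕ → ℕ`
there is `a ∈ F` with `|a ∩ [0, f n)| ≤ n` for all `n`. (The trivial filter `𝒫(ℕ)`
trivially satisfies this.) -/
def IsRapid (F : Set (Set ℕ)) : Prop :=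
  ∀ f : ℕ → ℕ, StrictMono f → ∃ a ∈ F, ∀ n, (a ∩ Set.Iio (f n)).ncard ≤ n

/-- `d` is a partitioning real: strictly increasing with `d 0 = 0`.
The associated intervals are `I^d_n = [d n, d (n+1))`. -/
def IsPartitioning (d : ℕ → ℕ) : Prop := StrictMono d ∧ d 0 = 0

/-- The restriction of `x ∈ 2^ω` to the interval `I^d_n = [d n, d (n+1))`,
as a binary string of length `|I^d_n|`. -/
def restrictI (d : ℕ → ℕ) (x : ℕ → Bool) (n : ℕ) : List Bool :=
  (List.range (d (n + 1) - d n)).map fun i => x (d n + i)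

/-- `B` is a `d`-binary slalom: `|B n| ≤ n` and `B n ⊆ {0,1}^{|I^d_n|}` for all `n`. -/
def IsBinarySlalom (d : ℕ → ℕ) (B : ℕ → Finset (List Bool)) : Prop :=
  (∀ n, (B n).card ≤ n) ∧ ∀ n, ∀ s ∈ B n, s.length = d (n + 1) - d n

/-- `X ⊆ 2^ω` goes through the `d`-binary slalom `B`: every `x ∈ X` satisfies
`x ↾ I^d_n ∈ B n` for all but finitely many `n`. -/
def GoesThroughBin (d : ℕ → ℕ) (X : Set (ℕ → Bool)) (B : ℕ → Finset (List Bool)) : Prop :=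
  ∀ x ∈ X, ∀ᶠ n in atTop, restrictI d x n ∈ B n


private lemma getD_map_range (g : ℕ → Bool) (L i : ℕ) (hi : i < L) :
    ((List.range L).map g).getD i false = g i := by
  rw [List.getD_eq_getElem _ _ (by simpa using hi)]
  simp

private def dOf (f : ℕ → ℕ) : ℕ → ℕ
  | 0 => 0
  | k + 1 => dOf f k + 1 + f ((k + 2) * (k + 1) ^ 2)

private lemma dOf_strictMono (f : ℕ → ℕ) : StrictMono (dOf f) :=
  strictMono_nat_of_lt_succ fun k => by
    show dOf f k < dOf f k + 1 + f ((k + 2) * (k + 1) ^ 2); omega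

private lemma f_le_dOf_succ (f : ℕ → ℕ) (k : ℕ) :
    f ((k + 2) * (k + 1) ^ 2) ≤ dOf f (k + 1) := by
  show _ ≤ dOf f k + 1 + f ((k + 2) * (k + 1) ^ 2); omega

private lemma splitPt_mem_aux (d : ℕ → ℕ) (x y : ℕ → Bool) (hxy : x ≠ y) (m : ℕ)
    (hle : d m ≤ splitPt x y) (hlt : splitPt x y < d (m + 1)) :
    d m + splitPt (fun i => (restrictI d x m).getD i false)
      (fun i => (restrictI d y m).getD i false) = splitPt x y := by
  have hne : {n | x n ≠ y n}.Nonempty := Function.ne_iff.mp hxy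
  have hmem : splitPt x y ∈ {n | x n ≠ y n} := Nat.sInf_mem hne
  set h0 := splitPt x y with hh0
  have hsub : h0 - d m < d (m + 1) - d m := by omega
  have hEmem : (h0 - d m) ∈
      {i | (fun i => (restrictI d x m).getD i false) i ≠
           (fun i => (restrictI d y m).getD i false) i} := by
    simp only [Set.mem_setOf_eq, restrictI]
    rw [getD_map_range _ _ _ hsub, getD_map_range _ _ _ hsub]
    have : d m + (h0 - d m) = h0 := by omega
    rw [this]
    exact hmem
  have hEq : sInf {i | (fun i => (restrictI d x m).getD i false) i ≠
      (fun i => (restrictI d y m).getD i false) i} = h0 - d m := by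
    refine le_antisymm (Nat.sInf_le hEmem) (le_csInf ⟨_, hEmem⟩ ?_)
    intro j hj
    by_contra hc
    push_neg at hc
    have hj2 : j < d (m + 1) - d m := by omega
    have hlt2 : d m + j < h0 := by omega
    have := Nat.notMem_of_lt_sInf (s := {n | x n ≠ y n}) hlt2
    simp only [Set.mem_setOf_eq, not_not] at this
    apply hj
    simp only [Set.mem_setOf_eq, restrictI]
    rw [getD_map_range _ _ _ hj2, getD_map_range _ _ _ hj2, this]
  show d m + sInf _ = h0
  rw [hEq]; omega

theorem stmt12 (X : Set (ℕ → Bool))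
    (h : ∀ d : ℕ → ℕ, IsPartitioning d →
      ∃ B : ℕ → Finset (List Bool), IsBinarySlalom d B ∧ GoesThroughBin d X B) :
    IsRapid (raisonnier X) := by
  classical
  intro f hf
  obtain ⟨B, ⟨hBcard, _hBlen⟩, hGo⟩ := h (dOf f) ⟨dOf_strictMono f, rfl⟩
  set d := dOf f with hd
  have hdmono : StrictMono d := dOf_strictMono f
  set A : ℕ → Finset ℕ := fun m =>
    ((B m) ×ˢ (B m)).image fun p =>
      d m + splitPt (fun i => p.1.getD i false) (fun i => p.2.getD i false) with hA
  set a : Set ℕ := ⋃ m, ((A m : Set ℕ) ∩ Set.Ico (d m) (d (m + 1))) with ha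
  refine ⟨a, ?_, ?_⟩
  · -- a ∈ raisonnier X
    set Z : ℕ × List Bool → Set (ℕ → Bool) := fun p =>
      {x | (∀ m, p.1 ≤ m → restrictI d x m ∈ B m) ∧
        ∀ i < d p.1, x i = p.2.getD i false} with hZ
    refine ⟨fun k => Z ((Encodable.decode (α := ℕ × List Bool) k).getD (0, [])), ?_, ?_⟩
    · intro x hx
      obtain ⟨n0, hn0⟩ := eventually_atTop.mp (hGo x hx)
      refine Set.mem_iUnion.mpr
        ⟨Encodable.encode (n0, (List.range (d n0)).map x), ?_⟩
      rw [Encodable.encodek]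
      show _ ∈ Z (n0, (List.range (d n0)).map x)
      exact ⟨hn0, fun i hi => (getD_map_range x _ i hi).symm⟩
    · intro t ht
      obtain ⟨_, ⟨n, rfl⟩, x, hx, y, hy, hne, hsp⟩ := ht
      set p := (Encodable.decode (α := ℕ × List Bool) n).getD (0, []) with hp
      have hDne : {i | x i ≠ y i}.Nonempty := Function.ne_iff.mp hne
      have hmem : splitPt x y ∈ {i | x i ≠ y i} := Nat.sInf_mem hDne
      set h0 := splitPt x y with hh0
      have hdp : d p.1 ≤ h0 := by
        by_contra hc
        push_neg at hc
        exact hmem (by rw [hx.2 h0 hc, hy.2 h0 hc])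
      set m := Nat.findGreatest (fun m => d m ≤ h0) (h0 + 1) with hm
      have hm1 : d m ≤ h0 :=
        Nat.findGreatest_spec (P := fun m => d m ≤ h0) (m := p.1)
          (le_trans (le_trans (hdmono.le_apply) hdp) (Nat.le_succ _)) hdp
      have hm2 : h0 < d (m + 1) := by
        by_contra hc
        push_neg at hc
        exact Nat.findGreatest_is_greatest (P := fun m => d m ≤ h0) (Nat.lt_succ_self m)
          (by have := hdmono.le_apply (x := m + 1); omega) hc
      have hpm : p.1 ≤ m := by
        have := hdmono.lt_iff_lt (a := p.1) (b := m + 1)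
        omega
      have hxB : restrictI d x m ∈ B m := hx.1 m hpm
      have hyB : restrictI d y m ∈ B m := hy.1 m hpm
      have hkey := splitPt_mem_aux d x y hne m hm1 hm2
      have hInA : h0 ∈ A m := by
        rw [hA]
        exact Finset.mem_image.mpr
          ⟨(restrictI d x m, restrictI d y m),
            Finset.mem_product.mpr ⟨hxB, hyB⟩, hkey⟩
      have : t = h0 := hsp.symm
      subst this
      exact Set.mem_iUnion.mpr ⟨m, ⟨hInA, hm1, hm2⟩⟩
  · -- counting
    intro n
    set k := Nat.findGreatest (fun k => (k + 1) * k ^ 2 ≤ n) n with hk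
    have hNk : (k + 1) * k ^ 2 ≤ n :=
      Nat.findGreatest_spec (P := fun k => (k + 1) * k ^ 2 ≤ n) (m := 0)
        (Nat.zero_le n) (by simp)
    have hnN : n < (k + 2) * (k + 1) ^ 2 := by
      by_contra hc
      push_neg at hc
      have hge : k + 1 ≤ (k + 2) * (k + 1) ^ 2 := by nlinarith
      exact Nat.findGreatest_is_greatest (P := fun k => (k + 1) * k ^ 2 ≤ n)
        (Nat.lt_succ_self k) (by omega) hc
    have hfn : f n < d (k + 1) :=
      lt_of_lt_of_le (hf hnN) (f_le_dOf_succ f k)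
    have hsub : a ∩ Set.Iio (f n) ⊆ ((Finset.range (k + 1)).biUnion A : Finset ℕ) := by
      rintro t ⟨hta, htlt⟩
      obtain ⟨_, ⟨m, rfl⟩, htA, htl, htr⟩ := hta
      have : m < k + 1 := by
        have h1 : d m < d (k + 1) := lt_of_le_of_lt htl (lt_trans htlt hfn)
        exact hdmono.lt_iff_lt.mp h1
      exact Finset.mem_coe.mpr (Finset.mem_biUnion.mpr ⟨m, Finset.mem_range.mpr this, htA⟩)
    calc (a ∩ Set.Iio (f n)).ncard
        ≤ (((Finset.range (k + 1)).biUnion A : Finset ℕ) : Set ℕ).ncard :=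
          Set.ncard_le_ncard hsub (Finset.finite_toSet _)
      _ = ((Finset.range (k + 1)).biUnion A).card := Set.ncard_coe_finset _
      _ ≤ ∑ m ∈ Finset.range (k + 1), (A m).card := Finset.card_biUnion_le
      _ ≤ ∑ m ∈ Finset.range (k + 1), k ^ 2 := by
          refine Finset.sum_le_sum fun m hm => ?_
          have hmk : m ≤ k := Nat.lt_succ_iff.mp (Finset.mem_range.mp hm)
          calc (A m).card ≤ ((B m) ×ˢ (B m)).card := Finset.card_image_le
            _ = (B m).card * (B m).card := Finset.card_product _ _
            _ ≤ k * k := Nat.mul_le_mul (le_trans (hBcard m) hmk)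
                (le_trans (hBcard m) hmk)
            _ = k ^ 2 := (sq k).symm
      _ = (k + 1) * k ^ 2 := by simp [Finset.sum_const, mul_comm]
      _ ≤ n := hNk
end

section
/- Let X ⊆ 2^ω. If the Raisonnier filter F_X is rapid, then for every partitioning real d there exists a d-binary slalom B such that X goes through B. -/
open Filter Set

/-!
Cover `X` by countably many `Y i` whose splitting points all lie in a set `a` that is
thin below `d (4 ^ (m + 1))`. Two points of `Y i` that differ below `d (n + 1)` already
differ at a splitting point below `d (n + 1)`, so `Y i` has at most `2 ^ c n` restrictions
to `I^d_n`, where `c n = |a ∩ [0, d (n + 1))| ≤ log₄ n`. Hence the restrictions of the first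
`n / 2 ^ c n` sets `Y i` fit into a slalom, and this number tends to infinity.
-/

lemma splitPt_le_of_ne {x y : ℕ → Bool} {k : ℕ} (h : x k ≠ y k) : splitPt x y ≤ k :=
  Nat.sInf_le h

lemma apply_splitPt_ne {x y : ℕ → Bool} {k : ℕ} (h : x k ≠ y k) :
    x (splitPt x y) ≠ y (splitPt x y) :=
  Nat.sInf_mem (s := {n | x n ≠ y n}) ⟨k, h⟩

/-- A point of `Y` is determined, among the points of `Y`, by its values at the splitting
points of `Y`. -/
lemma ncard_image_le_two_pow_ncard_splitPts {α : Type*} {Y : Set (ℕ → Bool)} {m : ℕ}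
    (f : (ℕ → Bool) → α) (hf : ∀ x y, (∀ k < m, x k = y k) → f x = f y) :
    (f '' Y).ncard ≤ 2 ^ (splitPts Y ∩ Iio m).ncard := by
  set S := splitPts Y ∩ Iio m
  let r : (ℕ → Bool) → (S → Bool) := fun x s => x s
  have hr : ∀ x ∈ Y, ∀ y ∈ Y, r x = r y → f x = f y := by
    intro x hx y hy hxy
    apply hf
    by_contra! ⟨k, hk, hne⟩
    have hS : splitPt x y ∈ S :=
      ⟨⟨x, hx, y, hy, fun h => hne (h ▸ rfl), rfl⟩, (splitPt_le_of_ne hne).trans_lt hk⟩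
    exact apply_splitPt_ne hne (congrFun hxy ⟨_, hS⟩)
  calc (f '' Y).ncard ≤ (univ : Set (S → Bool)).ncard := by
        refine ncard_le_ncard_of_injOn (fun z => r (Function.invFunOn f Y z))
          (fun _ _ => mem_univ _) ?_
        rintro _ ⟨x, hx, rfl⟩ _ ⟨y, hy, rfl⟩ hxy
        have hx' := Function.invFunOn_eq (f := f) ⟨x, hx, rfl⟩
        have hy' := Function.invFunOn_eq (f := f) ⟨y, hy, rfl⟩
        rw [← hx', ← hy']
        exact hr _ (Function.invFunOn_mem ⟨x, hx, rfl⟩) _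
          (Function.invFunOn_mem ⟨y, hy, rfl⟩) hxy
    _ = 2 ^ S.ncard := by simp [ncard_univ, Nat.card_fun, Nat.card_coe_set_eq]

lemma restrictI_eq_of_agree {d : ℕ → ℕ} (hd : Monotone d) {x y : ℕ → Bool} {n : ℕ}
    (h : ∀ k < d (n + 1), x k = y k) : restrictI d x n = restrictI d y n := by
  refine List.map_congr_left fun i hi => h _ ?_
  have := hd n.le_succ
  rw [List.mem_range] at hi
  omega

lemma finite_image_restrictI (d : ℕ → ℕ) (Y : Set (ℕ → Bool)) (n : ℕ) :
    ((restrictI d · n) '' Y).Finite :=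
  (List.finite_length_eq Bool (d (n + 1) - d n)).subset <| by
    rintro _ ⟨x, -, rfl⟩
    simp [restrictI]

lemma exists_binarySlalom_of_cover (d : ℕ → ℕ) {X : Set (ℕ → Bool)}
    {Y : ℕ → Set (ℕ → Bool)} (hXY : X ⊆ ⋃ i, Y i) {c : ℕ → ℕ}
    (hYc : ∀ i n, ((restrictI d · n) '' Y i).ncard ≤ 2 ^ c n)
    (hc : ∀ C, ∀ᶠ n in atTop, C * 2 ^ c n ≤ n) :
    ∃ B, IsBinarySlalom d B ∧ GoesThroughBin d X B := by
  classical
  let B n := (Finset.range (n / 2 ^ c n)).biUnion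
    fun i => (finite_image_restrictI d (Y i) n).toFinset
  refine ⟨B, ⟨fun n => ?_, fun n s hs => ?_⟩, ?_⟩
  · calc (B n).card ≤ n / 2 ^ c n * 2 ^ c n := by
          refine (Finset.card_biUnion_le_card_mul _ _ _ fun i _ => ?_).trans_eq
            (by rw [Finset.card_range])
          rw [← ncard_eq_toFinset_card _ (finite_image_restrictI d (Y i) n)]
          exact hYc i n
      _ ≤ n := Nat.div_mul_le_self n _
  · simp only [B, Finset.mem_biUnion, Finite.mem_toFinset] at hs
    obtain ⟨i, -, x, -, rfl⟩ := hs
    simp [restrictI]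
  · intro x hx
    obtain ⟨i, hi⟩ := mem_iUnion.mp (hXY hx)
    filter_upwards [hc (i + 1)] with n hn
    have hiB : i < n / 2 ^ c n := (Nat.le_div_iff_mul_le (by positivity)).mpr hn
    simp only [B, Finset.mem_biUnion, Finite.mem_toFinset]
    exact ⟨i, Finset.mem_range.mpr hiB, x, hi, rfl⟩

lemma eventually_mul_two_pow_le {c : ℕ → ℕ} (hc : ∀ m n, n < 4 ^ (m + 1) → c n ≤ m)
    (C : ℕ) :
    ∀ᶠ n in atTop, C * 2 ^ c n ≤ n := by
  filter_upwards [eventually_ge_atTop (4 ^ C)] with n hn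
  have hn0 : n ≠ 0 := Nat.one_le_iff_ne_zero.mp ((Nat.one_le_pow C 4 (by norm_num)).trans hn)
  set m := Nat.log 4 n
  have hCm : C ≤ m := Nat.le_log_of_pow_le (by norm_num) hn
  calc C * 2 ^ c n ≤ 2 ^ m * 2 ^ m :=
        Nat.mul_le_mul (Nat.lt_two_pow_self.le.trans (Nat.pow_le_pow_right two_pos hCm))
          (Nat.pow_le_pow_right two_pos (hc m n (Nat.lt_pow_succ_log_self (by norm_num) n)))
    _ = 4 ^ m := by rw [← mul_pow]; norm_num
    _ ≤ n := Nat.pow_log_le_self 4 hn0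

theorem stmt13 (X : Set (ℕ → Bool)) (h : IsRapid (raisonnier X)) :
    ∀ d : ℕ → ℕ, IsPartitioning d →
      ∃ B : ℕ → Finset (List Bool), IsBinarySlalom d B ∧ GoesThroughBin d X B := by
  rintro d ⟨hd, -⟩
  have hf : StrictMono fun m => d (4 ^ (m + 1)) :=
    hd.comp fun i j hij => Nat.pow_lt_pow_right (by norm_num) (by omega)
  obtain ⟨a, ⟨Y, hXY, hYa⟩, ha⟩ := h _ hf
  refine exists_binarySlalom_of_cover d hXY (c := fun n => (a ∩ Iio (d (n + 1))).ncard)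
    (fun i n => ?_) (eventually_mul_two_pow_le fun m n hn => ?_)
  · have hYi : splitPts (Y i) ⊆ a := (subset_iUnion (fun i => splitPts (Y i)) i).trans hYa
    refine (ncard_image_le_two_pow_ncard_splitPts _ fun _ _ =>
      restrictI_eq_of_agree hd.monotone).trans (Nat.pow_le_pow_right two_pos ?_)
    exact ncard_le_ncard (inter_subset_inter_left _ hYi) ((finite_Iio _).inter_of_right _)
  · refine (ncard_le_ncard ?_ ((finite_Iio _).inter_of_right _)).trans (ha m)
    exact inter_subset_inter_right _ (Iio_subset_Iio (hd.monotone hn))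
end

section
/- The collection R = { X ⊆ 2^ω : the Raisonnier filter F_X is rapid } is a σ-ideal on 2^ω: ∅ ∈ R, R is closed under subsets (Y ⊆ X ∈ R implies Y ∈ R), and R is closed under countable unions (if X_n ∈ R for all n < ω then ⋃_{n<ω} X_n ∈ R). -/
/-!
Only closure under countable unions needs an idea. Given a strictly increasing `f`, rapidity of
the filter of `X k`, applied to `m ↦ f (2 ^ (k + 1) * (m + 1))`, yields `a k` in that filter
meeting `[0, f n)` in at most `n / 2 ^ (k + 1)` points. The union of the `a k` lies in the filter
of `⋃ k, X k`; below `f n` only the `a k` with `k < n` contribute, and the geometric sum of their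
bounds is at most `n`.
-/

open Filter Set

/-- The Raisonnier ideal: the collection of `X ⊆ 2^ω` whose Raisonnier filter is rapid. -/
def Rideal : Set (Set (ℕ → Bool)) := {X | IsRapid (raisonnier X)}

lemma sum_range_div_two_pow_succ_le (n K : ℕ) :
    ∑ k ∈ Finset.range K, n / 2 ^ (k + 1) ≤ n := by
  induction K generalizing n with
  | zero => simp
  | succ K ih =>
    have halve : ∀ k, n / 2 ^ (k + 1 + 1) = n / 2 / 2 ^ (k + 1) := fun k => by
      rw [Nat.div_div_eq_div_mul, pow_succ' 2 (k + 1)]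
    rw [Finset.sum_range_succ']
    simp only [halve]
    have := ih (n / 2)
    omega

lemma ncard_iUnion_inter_le_of_le_div_two_pow {α : Type*} {a : ℕ → Set α} {s : Set α}
    (hs : s.Finite) {n : ℕ} (h : ∀ k, (a k ∩ s).ncard ≤ n / 2 ^ (k + 1)) :
    ((⋃ k, a k) ∩ s).ncard ≤ n := by
  have hvanish : ∀ k, n ≤ k → a k ∩ s = ∅ := fun k hk => by
    have hpow : k + 1 < 2 ^ (k + 1) := Nat.lt_two_pow_self
    have hzero := h k
    rw [Nat.div_eq_of_lt (by omega), Nat.le_zero,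
      ncard_eq_zero (hs.subset inter_subset_right)] at hzero
    exact hzero
  have hsub : (⋃ k, a k) ∩ s ⊆ ⋃ k ∈ Finset.range n, a k ∩ s := by
    rintro x ⟨hx, hxs⟩
    obtain ⟨k, hk⟩ := mem_iUnion.1 hx
    have hkn : k < n := by
      by_contra! hnk
      exact (hvanish k hnk).subset ⟨hk, hxs⟩
    exact mem_biUnion (Finset.mem_range.2 hkn) ⟨hk, hxs⟩
  calc ((⋃ k, a k) ∩ s).ncard
      ≤ (⋃ k ∈ Finset.range n, a k ∩ s).ncard :=
        ncard_le_ncard hsub (hs.subset (iUnion₂_subset fun _ _ => inter_subset_right))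
    _ ≤ ∑ k ∈ Finset.range n, (a k ∩ s).ncard := Finset.set_ncard_biUnion_le _ _
    _ ≤ ∑ k ∈ Finset.range n, n / 2 ^ (k + 1) := Finset.sum_le_sum fun k _ => h k
    _ ≤ n := sum_range_div_two_pow_succ_le n n

lemma IsRapid.mono {F G : Set (Set ℕ)} (hFG : F ⊆ G) (hF : IsRapid F) : IsRapid G :=
  fun f hf => (hF f hf).imp fun _ ⟨ha, hcard⟩ => ⟨hFG ha, hcard⟩

lemma isRapid_of_empty_mem {F : Set (Set ℕ)} (h : ∅ ∈ F) : IsRapid F :=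
  fun _ _ => ⟨∅, h, fun n => by simp⟩

lemma IsRapid.exists_ncard_inter_Iio_le_div {F : Set (Set ℕ)} (hF : IsRapid F) {f : ℕ → ℕ}
    (hf : StrictMono f) {c : ℕ} (hc : 0 < c) :
    ∃ a ∈ F, ∀ n, (a ∩ Iio (f n)).ncard ≤ n / c := by
  have hg : StrictMono fun m => f (c * (m + 1)) :=
    hf.comp fun m m' hmm' => Nat.mul_lt_mul_of_pos_left (by omega) hc
  obtain ⟨a, ha, hcard⟩ := hF _ hg
  refine ⟨a, ha, fun n => ?_⟩
  have hle : f n ≤ f (c * (n / c + 1)) := hf.monotone (Nat.lt_mul_div_succ n hc).le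
  calc (a ∩ Iio (f n)).ncard
      ≤ (a ∩ Iio (f (c * (n / c + 1)))).ncard :=
        ncard_le_ncard (inter_subset_inter_right _ (Iio_subset_Iio hle))
          ((finite_Iio _).subset inter_subset_right)
    _ ≤ n / c := hcard _

lemma raisonnier_anti_s15 : Antitone raisonnier :=
  fun _ _ hXY _ ⟨Y, hcover, hsplit⟩ => ⟨Y, hXY.trans hcover, hsplit⟩

lemma splitPts_singleton (x : ℕ → Bool) : splitPts {x} = ∅ :=
  eq_empty_of_forall_notMem fun _ ⟨_, hy, _, hz, hne, _⟩ => hne (hy.trans hz.symm)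

lemma empty_mem_raisonnier_of_countable {X : Set (ℕ → Bool)} (hX : X.Countable) :
    ∅ ∈ raisonnier X := by
  obtain ⟨x, hx⟩ := countable_iff_exists_subset_range.1 hX
  refine ⟨fun n => {x n}, fun y hy => ?_, by simp only [splitPts_singleton, iUnion_empty,
    subset_rfl]⟩
  obtain ⟨n, rfl⟩ := hx hy
  exact mem_iUnion.2 ⟨n, rfl⟩

lemma iUnion_mem_raisonnier_iUnion {X : ℕ → Set (ℕ → Bool)} {a : ℕ → Set ℕ}
    (h : ∀ k, a k ∈ raisonnier (X k)) : ⋃ k, a k ∈ raisonnier (⋃ k, X k) := by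
  choose Y hcover hsplit using h
  refine ⟨fun p => Y p.unpair.1 p.unpair.2, fun x hx => ?_, iUnion_subset fun p => ?_⟩
  · obtain ⟨k, hk⟩ := mem_iUnion.1 hx
    obtain ⟨m, hm⟩ := mem_iUnion.1 (hcover k hk)
    exact mem_iUnion.2 ⟨Nat.pair k m, by simpa using hm⟩
  · exact (subset_iUnion (fun m => splitPts (Y p.unpair.1 m)) p.unpair.2).trans
      ((hsplit p.unpair.1).trans (subset_iUnion a _))

lemma isRapid_raisonnier_iUnion {X : ℕ → Set (ℕ → Bool)}
    (h : ∀ k, IsRapid (raisonnier (X k))) : IsRapid (raisonnier (⋃ k, X k)) := by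
  intro f hf
  choose a ha hcard using fun k =>
    (h k).exists_ncard_inter_Iio_le_div hf (pow_pos two_pos (k + 1))
  exact ⟨⋃ k, a k, iUnion_mem_raisonnier_iUnion ha,
    fun n => ncard_iUnion_inter_le_of_le_div_two_pow (finite_Iio _) fun k => hcard k n⟩

theorem stmt15 :
    (∅ ∈ Rideal) ∧
    (∀ X ∈ Rideal, ∀ Y : Set (ℕ → Bool), Y ⊆ X → Y ∈ Rideal) ∧
    (∀ Xn : ℕ → Set (ℕ → Bool), (∀ n, Xn n ∈ Rideal) → (⋃ n, Xn n) ∈ Rideal) :=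
  ⟨isRapid_of_empty_mem (empty_mem_raisonnier_of_countable countable_empty),
    fun _ hX _ hYX => hX.mono (raisonnier_anti_s15 hYX),
    fun _ hXn => isRapid_raisonnier_iUnion hXn⟩
end

section
/- add(N) ≥ min{ non(R), 𝔟 }, where N is the ideal of Lebesgue-null subsets of ℝ and R is the Raisonnier ideal on 2^ω. -/
open Filter Set

open MeasureTheory Cardinal in
/-- `add(N)`: the least cardinality of a family of Lebesgue-null subsets of ℝ whose
union is not Lebesgue-null. -/
noncomputable def addNull : Cardinal :=
  sInf {c : Cardinal | ∃ A : Set (Set ℝ), #A = c ∧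
    (∀ s ∈ A, volume s = 0) ∧ volume (⋃₀ A) ≠ 0}

open MeasureTheory Cardinal in
/-- `cof(N)`: the least cardinality of a family of Lebesgue-null subsets of ℝ that is
cofinal in the null ideal. -/
noncomputable def cofNull : Cardinal :=
  sInf {c : Cardinal | ∃ A : Set (Set ℝ), #A = c ∧
    (∀ s ∈ A, volume s = 0) ∧ ∀ t : Set ℝ, volume t = 0 → ∃ s ∈ A, t ⊆ s}

open Cardinal in
/-- `non(R)`: the least cardinality of a subset of `2^ω` not in the Raisonnier ideal. -/
noncomputable def nonR : Cardinal :=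
  sInf {c : Cardinal | ∃ X : Set (ℕ → Bool), #X = c ∧ X ∉ Rideal}

open Cardinal in
/-- `cov(R)`: the least cardinality of a subfamily of the Raisonnier ideal covering `2^ω`. -/
noncomputable def covR : Cardinal :=
  sInf {c : Cardinal | ∃ C : Set (Set (ℕ → Bool)), #C = c ∧
    (∀ X ∈ C, X ∈ Rideal) ∧ ⋃₀ C = Set.univ}

open Cardinal in
/-- The bounding number `𝔟`: the least cardinality of a `≤*`-unbounded family in `ω^ω`. -/
noncomputable def boundingNum : Cardinal :=
  sInf {c : Cardinal | ∃ F : Set (ℕ → ℕ), #F = c ∧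
    ∀ g : ℕ → ℕ, ∃ f ∈ F, ¬ ∀ᶠ n in Filter.atTop, f n ≤ g n}

open Cardinal in
/-- The dominating number `𝔡`: the least cardinality of a `≤*`-dominating family in `ω^ω`. -/
noncomputable def dominatingNum : Cardinal :=
  sInf {c : Cardinal | ∃ D : Set (ℕ → ℕ), #D = c ∧
    ∀ f : ℕ → ℕ, ∃ g ∈ D, ∀ᶠ n in Filter.atTop, f n ≤ g n}

/-!
Let `𝒜` be a family of null sets with `|𝒜| < min(non(R), 𝔟)`. Each `A ∈ 𝒜` has a cover by dyadic
cells of finite total measure in which every point of `A` is covered infinitely often. Since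
`|𝒜| < 𝔟`, a single increasing `G` lets us cut each of these covers into blocks, the `n`-th made of
cells with code below `G n` and of measure at most `8⁻ⁿ`, such that every point of `A` still lies
in infinitely many blocks. Writing the blocks of `A` into one real `x_A ∈ 2^ω` gives a set `X` of
size `< non(R)`, so `F_X` is rapid: `X ⊆ ⋃ₘ Yₘ` where all splitting points of each `Yₘ` lie in a
set `a` having at most `n` elements below the place where the `n`-th blocks are stored. Two reals
of `Yₘ` that agree on these elements of `a` have the same `n`-th block, so the `n`-th blocks of
`Yₘ` cover a set of measure at most `2ⁿ 8⁻ⁿ`, and Borel–Cantelli shows that `⋃ 𝒜` is null.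
-/

open MeasureTheory Encodable Cardinal
open scoped ENNReal

section Splitting

lemma forall_lt_eq_of_splitPts_subset {Y : Set (ℕ → Bool)} {a : Set ℕ} (ha : splitPts Y ⊆ a)
    {x y : ℕ → Bool} (hx : x ∈ Y) (hy : y ∈ Y) {L : ℕ} (hxy : ∀ q ∈ a ∩ Iio L, x q = y q) :
    ∀ q < L, x q = y q := by
  intro q hq
  by_contra hne
  have hsplit : x (splitPt x y) ≠ y (splitPt x y) := Nat.sInf_mem (s := {n | x n ≠ y n}) ⟨q, hne⟩
  have hle : splitPt x y ≤ q := Nat.sInf_le hne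
  exact hsplit (hxy _ ⟨ha ⟨x, hx, y, hy, fun h => hne (h ▸ rfl), rfl⟩, hle.trans_lt hq⟩)

variable {α : Type*} [MeasurableSpace α] (μ : Measure α)

lemma measure_biUnion_le_two_pow_ncard {Y : Set (ℕ → Bool)} {a : Set ℕ} (ha : splitPts Y ⊆ a)
    {L : ℕ} {F : (ℕ → Bool) → Set α} (hF : ∀ x y, (∀ q < L, x q = y q) → F x = F y)
    {ε : ℝ≥0∞} (hε : ∀ x ∈ Y, μ (F x) ≤ ε) :
    μ (⋃ x ∈ Y, F x) ≤ 2 ^ (a ∩ Iio L).ncard * ε := by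
  set T := a ∩ Iio L
  have : Fintype T := ((finite_Iio L).subset inter_subset_right).fintype
  set fiber : (T → Bool) → Set (ℕ → Bool) := fun ρ => {x ∈ Y | ∀ q : T, x q = ρ q}
  have hfiber : ∀ ρ, μ (⋃ x ∈ fiber ρ, F x) ≤ ε := by
    intro ρ
    rcases eq_empty_or_nonempty (fiber ρ) with h | ⟨x₀, hx₀Y, hx₀⟩
    · simp [h]
    refine (measure_mono (iUnion₂_subset fun x ⟨hxY, hx⟩ => ?_)).trans (hε x₀ hx₀Y)
    refine (hF x x₀ (forall_lt_eq_of_splitPts_subset ha hxY hx₀Y fun q hq => ?_)).le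
    rw [hx ⟨q, hq⟩, hx₀ ⟨q, hq⟩]
  calc μ (⋃ x ∈ Y, F x) ≤ μ (⋃ ρ, ⋃ x ∈ fiber ρ, F x) :=
        measure_mono (iUnion₂_subset fun x hx => subset_iUnion_of_subset (fun q => x q)
          (subset_biUnion_of_mem (u := F) ⟨hx, fun _ => rfl⟩))
    _ ≤ ∑ ρ, μ (⋃ x ∈ fiber ρ, F x) := measure_iUnion_fintype_le _ _
    _ ≤ ∑ _ρ : T → Bool, ε := Finset.sum_le_sum fun ρ _ => hfiber ρ
    _ = 2 ^ T.ncard * ε := by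
        rw [Finset.sum_const, Finset.card_univ, Fintype.card_fun, Fintype.card_bool, nsmul_eq_mul,
          ← Nat.card_coe_set_eq, Nat.card_eq_fintype_card]
        push_cast; rfl

end Splitting

section BlockCoding

variable {α ι : Type*} [Encodable ι]

open Classical in
noncomputable def blockCode (sel : ℕ → Set ι) (p : ℕ) : Bool :=
  decide (∃ i ∈ sel p.unpair.1, encode i = p.unpair.2)

def blockDecode (G : ℕ → ℕ) (D : ι → Set α) (x : ℕ → Bool) (n : ℕ) : Set α :=
  ⋃ (i) (_ : encode i < G n) (_ : x (Nat.pair n (encode i)) = true), D i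

lemma blockDecode_blockCode (G : ℕ → ℕ) (D : ι → Set α) (sel : ℕ → Set ι) (n : ℕ) :
    blockDecode G D (blockCode sel) n = ⋃ i ∈ {i ∈ sel n | encode i < G n}, D i := by
  ext y
  simp [blockDecode, blockCode, and_comm]

lemma blockDecode_congr (G : ℕ → ℕ) (D : ι → Set α) {x y : ℕ → Bool} {n : ℕ}
    (h : ∀ q < Nat.pair n (G n), x q = y q) : blockDecode G D x n = blockDecode G D y n := by
  simp only [blockDecode]
  refine iUnion_congr fun i => iUnion_congr fun hi => ?_
  rw [h _ (Nat.pair_lt_pair_right n hi)]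

end BlockCoding

section Cover

variable {α ι : Type*} [MeasurableSpace α] (μ : Measure α) (D : ι → Set α)

/-- Tagging each cell with the level `k` at which it was chosen keeps the covers of different
levels apart, so that every point of `A` is covered infinitely often. -/
lemma exists_infinite_summable_tagged_cover {A : Set α}
    (hA : ∀ ε > 0, ∃ S : Set ι, A ⊆ ⋃ i ∈ S, D i ∧ ∑' i : S, μ (D i) ≤ ε) :
    ∃ S : Set (ℕ × ι), (∀ x ∈ A, {p ∈ S | x ∈ D p.2}.Infinite) ∧
      ∑' p : S, μ (D (p : ℕ × ι).2) ≠ ∞ := by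
  choose T hTA hTμ using fun k : ℕ => hA (2⁻¹ ^ k) (ENNReal.pow_pos (by simp) k)
  refine ⟨{p | p.2 ∈ T p.1}, fun x hx => ?_, ?_⟩
  · choose i hiT hxi using fun k => mem_iUnion₂.mp (hTA k hx)
    exact infinite_of_injective_forall_mem (f := fun k => (k, i k))
      (fun k l hkl => congrArg Prod.fst hkl) fun k => ⟨hiT k, hxi k⟩
  · refine ne_top_of_le_ne_top (ENNReal.tsum_geometric_two.trans_ne ENNReal.ofNat_ne_top) ?_
    calc ∑' p : {p : ℕ × ι | p.2 ∈ T p.1}, μ (D (p : ℕ × ι).2)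
        = ∑' k, ∑' i, (T k).indicator (fun i => μ (D i)) i := by
          rw [tsum_subtype _ fun p : ℕ × ι => μ (D p.2), ENNReal.tsum_prod']; rfl
      _ = ∑' k, ∑' i : T k, μ (D i) := by simp_rw [← tsum_subtype]
      _ ≤ ∑' k : ℕ, (2⁻¹ : ℝ≥0∞) ^ k := ENNReal.tsum_le_tsum hTμ

variable [Encodable ι]

lemma exists_measure_biUnion_encode_ge_le {S : Set ι} (hS : ∑' i : S, μ (D i) ≠ ∞)
    {ε : ℝ≥0∞} (hε : 0 < ε) : ∃ J : ℕ, μ (⋃ i ∈ {i ∈ S | J ≤ encode i}, D i) ≤ ε := by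
  obtain ⟨s, hs⟩ := ((ENNReal.tendsto_tsum_compl_atTop_zero hS).eventually (gt_mem_nhds hε)).exists
  set J := s.sup (fun i => encode (i : ι)) + 1
  refine ⟨J, (measure_mono ?_).trans ((measure_iUnion_le _).trans hs.le)⟩
  refine iUnion₂_subset fun i ⟨hiS, hi⟩ =>
    subset_iUnion_of_subset ⟨⟨i, hiS⟩, fun his => ?_⟩ subset_rfl
  have : encode i < J := Nat.lt_succ_of_le (Finset.le_sup (f := fun i : S => encode (i : ι)) his)
  omega

end Cover

lemma exists_ge_mem_Ico {a b : ℕ → ℕ} {M i : ℕ} (hab : ∀ n ≥ M, a (n + 1) ≤ b n)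
    (hai : a M ≤ i) (hib : ∃ n ≥ M, i < b n) : ∃ n ≥ M, i ∈ Ico (a n) (b n) := by
  classical
  have hex : ∃ k, i < b (M + k) := by
    obtain ⟨n, hn, hi⟩ := hib
    exact ⟨n - M, by rwa [Nat.add_sub_cancel' hn]⟩
  refine ⟨M + Nat.find hex, Nat.le_add_right _ _, ?_, Nat.find_spec hex⟩
  rcases h : Nat.find hex with _ | k
  · simpa using hai
  · have hk : b (M + k) ≤ i := not_lt.mp (Nat.find_min hex (h ▸ k.lt_succ_self))
    exact (hab (M + k) (Nat.le_add_right _ _)).trans hk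

lemma exists_strictMono_forall_le (g : ℕ → ℕ) : ∃ G : ℕ → ℕ, StrictMono G ∧ ∀ n, g n ≤ G n :=
  ⟨fun n => n + ∑ k ∈ Finset.range (n + 1), g k,
    strictMono_nat_of_lt_succ fun n => by simp only [Finset.sum_range_succ _ (n + 1)]; omega,
    fun n => le_add_left (Finset.single_le_sum (fun _ _ => Nat.zero_le _)
      (Finset.self_mem_range_succ n))⟩

lemma exists_forall_eventually_le_of_mk_lt_boundingNum {κ : Type} (h : κ → ℕ → ℕ)
    (hκ : #κ < boundingNum) : ∃ g : ℕ → ℕ, ∀ k, ∀ᶠ n in atTop, h k n ≤ g n := by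
  by_contra hunb
  have hb : boundingNum ≤ #(range h) := csInf_le' ⟨range h, rfl, fun g => by
    obtain ⟨k, hk⟩ := not_forall.mp (not_exists.mp hunb g)
    exact ⟨h k, mem_range_self k, hk⟩⟩
  exact hκ.not_ge (hb.trans mk_range_le)

lemma mem_Rideal_of_mk_lt_nonR {X : Set (ℕ → Bool)} (hX : #X < nonR) : X ∈ Rideal := by
  by_contra hXR
  exact hX.not_ge (csInf_le' ⟨X, rfl, hXR⟩)

section NullAdditivity

variable {α ι : Type*} [MeasurableSpace α] (μ : Measure α) [Encodable ι] (D : ι → Set α)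

lemma exists_blockCode_frequently_mem {A : Set α} {S : Set ι}
    (hcover : ∀ y ∈ A, {i ∈ S | y ∈ D i}.Infinite) (hsum : ∑' i : S, μ (D i) ≠ ∞)
    {ε : ℕ → ℝ≥0∞} (hε : ∀ n, 0 < ε n) :
    ∃ h : ℕ → ℕ, ∀ G : ℕ → ℕ, Tendsto G atTop atTop → (∀ᶠ n in atTop, h n ≤ G n) →
      ∃ x : ℕ → Bool, (∀ n, μ (blockDecode G D x n) ≤ ε n) ∧
        ∀ y ∈ A, ∃ᶠ n in atTop, y ∈ blockDecode G D x n := by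
  choose J hJ using fun n => exists_measure_biUnion_encode_ge_le μ D hsum (hε n)
  -- once `J (n + 1) ≤ G n`, consecutive windows `[J n, G n)` overlap and catch every large code
  refine ⟨fun n => J (n + 1), fun G hG hJG =>
    ⟨blockCode fun n => {i ∈ S | J n ≤ encode i}, fun n => ?_, fun y hy => ?_⟩⟩
  · rw [blockDecode_blockCode]
    exact (measure_mono (biUnion_subset_biUnion_left fun i hi => hi.1)).trans (hJ n)
  · obtain ⟨N, hN⟩ := eventually_atTop.mp hJG
    refine frequently_atTop.mpr fun M => ?_
    obtain ⟨_, ⟨i, ⟨hiS, hyi⟩, rfl⟩, hi⟩ :=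
      ((hcover y hy).image encode_injective.injOn).exists_gt (J (max M N))
    obtain ⟨n, hn, hJn, hnG⟩ := exists_ge_mem_Ico (fun n hn => hN n (le_of_max_le_right hn)) hi.le
      (((hG.eventually_gt_atTop _).and (eventually_ge_atTop _)).exists.imp fun n h => ⟨h.2, h.1⟩)
    refine ⟨n, le_of_max_le_left hn, ?_⟩
    rw [blockDecode_blockCode]
    exact mem_biUnion ⟨⟨hiS, hJn⟩, hnG⟩ hyi

lemma measure_setOf_frequently_mem_blockDecode_eq_zero {X : Set (ℕ → Bool)} (hX : X ∈ Rideal)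
    {G : ℕ → ℕ} (hG : StrictMono G) (hsmall : ∀ x ∈ X, ∀ n, μ (blockDecode G D x n) ≤ 8⁻¹ ^ n) :
    μ {y | ∃ x ∈ X, ∃ᶠ n in atTop, y ∈ blockDecode G D x n} = 0 := by
  have hf : StrictMono fun n => Nat.pair n (G n) := strictMono_nat_of_lt_succ fun n =>
    (Nat.pair_lt_pair_right n (hG n.lt_succ_self)).trans (Nat.pair_lt_pair_left _ n.lt_succ_self)
  obtain ⟨a, ⟨Y, hXY, ha⟩, hthin⟩ := hX _ hf
  set Z : ℕ → Set α := fun n => ⋃ m ∈ Finset.range (n + 1), ⋃ x ∈ Y m ∩ X, blockDecode G D x n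
  -- `8⁻ⁿ` absorbs the `2ⁿ` possible `n`-th blocks of each `Yₘ` and the `n + 1 ≤ 2ⁿ` pieces
  -- `Y₀, …, Yₙ`
  have hZ : ∀ n, μ (Z n) ≤ 2⁻¹ ^ n := by
    intro n
    have hm : ∀ m, μ (⋃ x ∈ Y m ∩ X, blockDecode G D x n) ≤ 2 ^ n * 8⁻¹ ^ n := fun m =>
      (measure_biUnion_le_two_pow_ncard μ
        (fun _ ⟨x, hx, y, hy, h⟩ => ha (mem_iUnion.mpr ⟨m, x, hx.1, y, hy.1, h⟩))
        (fun x y => blockDecode_congr G D) fun x hx => hsmall x hx.2 n).trans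
        (by gcongr; exacts [one_le_two, hthin n])
    calc μ (Z n) ≤ ∑ m ∈ Finset.range (n + 1), μ (⋃ x ∈ Y m ∩ X, blockDecode G D x n) :=
          measure_biUnion_finset_le _ _
      _ ≤ ∑ m ∈ Finset.range (n + 1), 2 ^ n * 8⁻¹ ^ n := Finset.sum_le_sum fun m _ => hm m
      _ = (n + 1) * (2 ^ n * 8⁻¹ ^ n) := by simp
      _ ≤ 2 ^ n * (2 ^ n * 8⁻¹ ^ n) := by gcongr; exact_mod_cast Nat.lt_two_pow_self
      _ = (2 * 2 * 8⁻¹) ^ n := by rw [← mul_assoc, ← mul_pow, ← mul_pow]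
      _ = 2⁻¹ ^ n := by
          rw [show (8 : ℝ≥0∞) = 2 * 2 * 2 by norm_num, ENNReal.mul_inv (by simp) (by simp),
            ← mul_assoc, ENNReal.mul_inv_cancel (by norm_num) (by norm_num), one_mul]
  refine measure_mono_null (fun y ⟨x, hx, hfreq⟩ => ?_)
    (measure_setOfPred_frequently_eq_zero (p := fun n y => y ∈ Z n) ?_)
  · obtain ⟨m, hm⟩ := mem_iUnion.mp (hXY hx)
    exact (hfreq.and_eventually (eventually_ge_atTop m)).mono fun n ⟨hy, hmn⟩ =>
      mem_iUnion₂.mpr ⟨m, Finset.mem_range.mpr (Nat.lt_succ_of_le hmn),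
        mem_iUnion₂.mpr ⟨x, ⟨hm, hx⟩, hy⟩⟩
  · exact ne_top_of_le_ne_top (ENNReal.tsum_geometric_two.trans_ne ENNReal.ofNat_ne_top)
      (ENNReal.tsum_le_tsum hZ)

theorem measure_iUnion_null_of_mk_lt {κ : Type} (A : κ → Set α) (S : κ → Set ι)
    (hcover : ∀ k, ∀ y ∈ A k, {i ∈ S k | y ∈ D i}.Infinite)
    (hsum : ∀ k, ∑' i : S k, μ (D i) ≠ ∞)
    (hb : #κ < boundingNum) (hR : #κ < nonR) : μ (⋃ k, A k) = 0 := by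
  choose h hcode using fun k => exists_blockCode_frequently_mem μ D (hcover k) (hsum k)
    (ε := fun n => 8⁻¹ ^ n) fun n => ENNReal.pow_pos (by norm_num) n
  obtain ⟨g, hg⟩ := exists_forall_eventually_le_of_mk_lt_boundingNum h hb
  obtain ⟨G, hG, hgG⟩ := exists_strictMono_forall_le g
  choose x hxsmall hxfreq using fun k =>
    hcode k G hG.tendsto_atTop ((hg k).mono fun n hn => hn.trans (hgG n))
  have hX : range x ∈ Rideal := mem_Rideal_of_mk_lt_nonR (mk_range_le.trans_lt hR)
  refine measure_mono_null ?_ (measure_setOf_frequently_mem_blockDecode_eq_zero μ D hX hG ?_)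
  · exact iUnion_subset fun k y hy => ⟨x k, mem_range_self k, hxfreq k y hy⟩
  · rintro _ ⟨k, rfl⟩
    exact hxsmall k

end NullAdditivity

section Dyadic

/-- `dyadicCell (m, z)` is the interval `[z / 2 ^ m, (z + 1) / 2 ^ m)`. -/
def dyadicCell (p : ℕ × ℤ) : Set ℝ := {x | ⌊x * 2 ^ p.1⌋ = p.2}

lemma measurableSet_dyadicCell (p : ℕ × ℤ) : MeasurableSet (dyadicCell p) :=
  (Int.measurable_floor.comp (measurable_id.mul_const _)) (measurableSet_singleton p.2)

lemma floor_mul_two_pow_eq_of_le {x y : ℝ} {m m' : ℕ} (h : m' ≤ m)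
    (hxy : ⌊x * 2 ^ m⌋ = ⌊y * 2 ^ m⌋) : ⌊x * 2 ^ m'⌋ = ⌊y * 2 ^ m'⌋ := by
  have key : ∀ t : ℝ, ⌊t * 2 ^ m⌋ / ((2 ^ (m - m') : ℕ) : ℤ) = ⌊t * 2 ^ m'⌋ := fun t => by
    rw [← Int.mul_natCast_floor_div_cancel (pow_ne_zero _ two_ne_zero) (t * 2 ^ m')]
    push_cast
    rw [mul_assoc, ← pow_add, Nat.add_sub_cancel' h]
  rw [← key x, ← key y, hxy]

lemma exists_dyadicCell_subset {U : Set ℝ} (hU : IsOpen U) {x : ℝ} (hx : x ∈ U) :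
    ∃ m : ℕ, dyadicCell (m, ⌊x * 2 ^ m⌋) ⊆ U := by
  obtain ⟨δ, hδ, hball⟩ := Metric.isOpen_iff.mp hU x hx
  obtain ⟨m, hm⟩ := exists_pow_lt_of_lt_one hδ (by norm_num : (1 / 2 : ℝ) < 1)
  refine ⟨m, fun y hy => hball ?_⟩
  have h2 : (0 : ℝ) < 2 ^ m := by positivity
  have hyx : |y - x| * 2 ^ m < 1 := by
    rw [← abs_of_pos h2, ← abs_mul, sub_mul]
    exact Int.abs_sub_lt_one_of_floor_eq_floor hy
  rw [Metric.mem_ball, Real.dist_eq]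
  calc |y - x| < 1 / 2 ^ m := (lt_div_iff₀ h2).mpr hyx
    _ = (1 / 2) ^ m := (one_div_pow 2 m).symm
    _ < δ := hm

/-- Cells inside `U` whose ancestors (the coarser cells through their points) are not. -/
def maximalDyadicCells (U : Set ℝ) : Set (ℕ × ℤ) :=
  {p | dyadicCell p ⊆ U ∧ ∀ x ∈ dyadicCell p, ∀ m < p.1, ¬ dyadicCell (m, ⌊x * 2 ^ m⌋) ⊆ U}

lemma pairwiseDisjoint_maximalDyadicCells (U : Set ℝ) :
    (maximalDyadicCells U).PairwiseDisjoint dyadicCell := by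
  have key : ∀ p ∈ maximalDyadicCells U, ∀ q ∈ maximalDyadicCells U, ∀ x ∈ dyadicCell p,
      x ∈ dyadicCell q → p.1 ≤ q.1 := fun p hp q hq x hxp hxq => by
    by_contra! h
    exact hp.2 x hxp q.1 h (hxq ▸ hq.1)
  intro p hp q hq hpq
  refine disjoint_left.mpr fun x hxp hxq => hpq ?_
  have h1 : p.1 = q.1 := le_antisymm (key p hp q hq x hxp hxq) (key q hq p hp x hxq hxp)
  have h2 : p.2 = q.2 := by
    rw [← hxp, ← hxq, h1]
  exact Prod.ext h1 h2

lemma biUnion_maximalDyadicCells {U : Set ℝ} (hU : IsOpen U) :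
    ⋃ p ∈ maximalDyadicCells U, dyadicCell p = U := by
  classical
  refine Subset.antisymm (iUnion₂_subset fun p hp => hp.1) fun x hx => ?_
  have hex := exists_dyadicCell_subset hU hx
  refine mem_biUnion (x := (Nat.find hex, ⌊x * 2 ^ Nat.find hex⌋))
    ⟨Nat.find_spec hex, fun y hy m hm => ?_⟩ rfl
  rw [floor_mul_two_pow_eq_of_le hm.le hy]
  exact Nat.find_min hex hm

lemma exists_dyadicCell_cover {A : Set ℝ} (hA : volume A = 0) {ε : ℝ≥0∞} (hε : 0 < ε) :
    ∃ S : Set (ℕ × ℤ), A ⊆ ⋃ p ∈ S, dyadicCell p ∧ ∑' p : S, volume (dyadicCell p) ≤ ε := by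
  obtain ⟨U, hAU, hU, hUε⟩ := exists_isOpen_lt_of_lt A ε (hA ▸ hε)
  refine ⟨maximalDyadicCells U, (biUnion_maximalDyadicCells hU).symm ▸ hAU, ?_⟩
  rw [← measure_biUnion (to_countable _) (pairwiseDisjoint_maximalDyadicCells U)
    fun p _ => measurableSet_dyadicCell p, biUnion_maximalDyadicCells hU]
  exact hUε.le

end Dyadic

theorem stmt16 : min nonR boundingNum ≤ addNull := by
  have hne : {c : Cardinal | ∃ A : Set (Set ℝ), #A = c ∧
      (∀ s ∈ A, volume s = 0) ∧ volume (⋃₀ A) ≠ 0}.Nonempty :=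
    ⟨_, range fun x : ℝ => {x}, rfl, by rintro _ ⟨x, rfl⟩; exact Real.volume_singleton,
      by simp [sUnion_range, iUnion_of_singleton]⟩
  refine le_csInf hne ?_
  rintro _ ⟨A, rfl, hnull, hA⟩
  by_contra! hlt
  obtain ⟨hR, hb⟩ := lt_min_iff.mp hlt
  choose S hS using fun s : A => exists_infinite_summable_tagged_cover volume dyadicCell
    fun ε hε => exists_dyadicCell_cover (hnull s s.2) hε
  refine hA ?_
  rw [sUnion_eq_iUnion]
  exact measure_iUnion_null_of_mk_lt volume _ (fun s : A => s.1) S (fun s => (hS s).1)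
    (fun s => (hS s).2) hb hR
end
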